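/- Let L_{αβ} be complex 1-forms on a manifold, symmetric (L_{αβ}=L_{βα}) and 𝔧-invariant, M^α complex 1-forms, N_s real 1-forms, and let {η₁,η₂,η₃, θ^α, θ^{ᾱ}, φ₀,...,φ₃} be pointwise linearly independent 1-forms. Suppose the five 2-form identities \eqref{str-eq-dif} hold: 0 = -iM^α∧η₁ - π^α_{σ̄}M^{σ̄}∧(η₂+iη₃) - π^{ασ}L_{σβ}∧θ^β; 0 = -N_s∧η_s - 2M_β∧θ^β - 2M_{β̄}∧θ^{β̄}; 0 = -N₂∧η₃+N₃∧η₂+2iM_β∧θ^β-2iM_{β̄}∧θ^{β̄}; 0 = -N₃∧η₁+N₁∧η₃-2π_{σβ}M^σ∧θ^β-2π_{σ̄β̄}M^{σ̄}∧θ^{β̄}; 0 = -N₁∧η₂+N₂∧η₁+2iπ_{σβ}M^σ∧θ^β-2iπ_{σ̄β̄}M^{σ̄}∧θ^{β̄}. Then L_{αβ} = 0, M^α = 0, and N_s = 0. -/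

import Mathlib

/-!
Linear independence of the coframe gives real vectors `E_t, F_γ, G_γ` on which `η` and `θ`
take the values of a dual basis (with `θ^γ(G_γ) = i`), and a real 1-form vanishes as soon as it
vanishes on them and on the common kernel of `η` and `θ`. Evaluating the structure equations on
pairs of these vectors is the coefficient matching of the paper. Paired with `E₀`, the first
equation says that every `M^α` is complex-linear on the planes spanned by `F_γ, G_γ` and by
`E₁, E₂`; paired with `E₁`, it says that `M^α` is conjugate-linear there, so `M = 0`. Then the
first equation reduces to `L_{σβ} ∧ θ^β = 0`, which makes `L_{αβ}` complex-linear in the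
`θ`-directions, while `𝔧`-invariance makes it conjugate-linear, so `L = 0`. Finally the other
equations read `∑ N_s ∧ η_s = 0` and `N_i ∧ η_j = N_j ∧ η_i`, which kill the off-diagonal entries
of `N_s(E_t)` and the pairwise sums of its diagonal entries.
-/

open Finset Complex

/-- Standard skew form on `ℂ^{2n}`. -/
def piStd (n : ℕ) : Matrix (Fin (2*n)) (Fin (2*n)) ℂ :=
  fun α β => (if (α : ℕ) + n = (β : ℕ) then 1 else 0) - (if (α : ℕ) = (β : ℕ) + n then 1 else 0)

noncomputable def conjForm {V : Type*} [AddCommGroup V] [Module ℝ V]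
    (f : V →ₗ[ℝ] ℂ) : V →ₗ[ℝ] ℂ :=
  Complex.conjAe.toLinearMap.comp f

noncomputable def cForm {V : Type*} [AddCommGroup V] [Module ℝ V]
    (f : V →ₗ[ℝ] ℝ) : V →ₗ[ℝ] ℂ :=
  (Algebra.linearMap ℝ ℂ).comp f

open ComplexConjugate

section piStd

variable {n : ℕ}

theorem sum_piStd_mul_of_lt (α : Fin (2*n)) (hα : (α : ℕ) < n) (f : Fin (2*n) → ℂ) :
    ∑ β, piStd n α β * f β = f ⟨α + n, by omega⟩ := by
  rw [Finset.sum_eq_single_of_mem ⟨α + n, by omega⟩ (mem_univ _)]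
  · have h : (α : ℕ) ≠ α + n + n := by omega
    simp [piStd, h]
  · intro β _ hβ
    have h₁ : (α : ℕ) + n ≠ β := fun h => hβ (Fin.ext h.symm)
    have h₂ : (α : ℕ) ≠ β + n := by omega
    simp [piStd, h₁, h₂]

theorem sum_piStd_mul_of_ge (α : Fin (2*n)) (hα : n ≤ (α : ℕ)) (f : Fin (2*n) → ℂ) :
    ∑ β, piStd n α β * f β = -f ⟨α - n, by omega⟩ := by
  rw [Finset.sum_eq_single_of_mem ⟨α - n, by omega⟩ (mem_univ _)]
  · have h₁ : (α : ℕ) + n ≠ α - n := by omega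
    have h₂ : (α : ℕ) = α - n + n := by omega
    simp only [piStd, if_neg h₁, if_pos h₂]
    ring
  · intro β _ hβ
    have h₁ : (α : ℕ) + n ≠ β := by omega
    have h₂ : (α : ℕ) ≠ β + n := fun h => hβ (Fin.ext (by simp only; omega))
    simp [piStd, h₁, h₂]

theorem piStd_mul_piStd : piStd n * piStd n = -1 := by
  ext α β
  rw [Matrix.mul_apply]
  rcases lt_or_ge (α : ℕ) n with hα | hα
  · rw [sum_piStd_mul_of_lt α hα]
    simp only [piStd, Matrix.neg_apply, Matrix.one_apply, Fin.ext_iff]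
    split_ifs <;> first | omega | norm_num
  · rw [sum_piStd_mul_of_ge α hα]
    simp only [piStd, Matrix.neg_apply, Matrix.one_apply, Fin.ext_iff]
    split_ifs <;> first | omega | norm_num

theorem piStd_mulVec_injective : Function.Injective (piStd n).mulVec := by
  intro x y h
  simpa [Matrix.mulVec_mulVec, piStd_mul_piStd, Matrix.neg_mulVec] using
    congrArg (piStd n).mulVec h

theorem eq_of_sum_piStd_mul_eq {x y : Fin (2*n) → ℂ}
    (h : ∀ α, ∑ σ, piStd n α σ * x σ = ∑ σ, piStd n α σ * y σ) : x = y :=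
  piStd_mulVec_injective (funext h)

end piStd

theorem div_two_mul_add_div_two_mul_conj (a b : ℝ) (z : ℂ) :
    (a - I * b) / 2 * z + (a + I * b) / 2 * conj z = ((a * z.re + b * z.im : ℝ) : ℂ) := by
  apply Complex.ext <;> simp <;> ring

section DualVectors

variable {V ι κ : Type*} [AddCommGroup V] [Module ℝ V] [Fintype ι] [Fintype κ]

def realForms (η : ι → V →ₗ[ℝ] ℝ) (θ : κ → V →ₗ[ℝ] ℂ) : ι ⊕ κ ⊕ κ → V →ₗ[ℝ] ℝ :=
  Sum.elim η (Sum.elim (fun γ => reLm ∘ₗ θ γ) (fun γ => imLm ∘ₗ θ γ))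

theorem linearIndependent_realForms {η : ι → V →ₗ[ℝ] ℝ} {θ : κ → V →ₗ[ℝ] ℂ}
    (h : LinearIndependent ℂ
      (Sum.elim (fun s => cForm (η s)) (Sum.elim θ (fun γ => conjForm (θ γ))))) :
    LinearIndependent ℝ (fun i => ⇑(realForms η θ i)) := by
  rw [Fintype.linearIndependent_iff] at h ⊢
  intro g hg
  set a := fun γ => g (.inr (.inl γ))
  set b := fun γ => g (.inr (.inr γ))
  have hc := h (Sum.elim (fun s => (g (.inl s) : ℂ))
    (Sum.elim (fun γ => (a γ - I * b γ) / 2) (fun γ => (a γ + I * b γ) / 2))) <| by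
    ext v
    simpa [Fintype.sum_sum_type, realForms, cForm, conjForm, add_assoc,
      ← Finset.sum_add_distrib, div_two_mul_add_div_two_mul_conj, a, b]
      using congrArg (fun f => ((f v : ℝ) : ℂ)) hg
  rintro (s | γ | γ)
  · simpa using hc (.inl s)
  · simpa using congrArg re (hc (.inr (.inl γ)))
  · simpa using congrArg im (hc (.inr (.inl γ)))

theorem exists_apply_eq_of_linearIndependent {η : ι → V →ₗ[ℝ] ℝ} {θ : κ → V →ₗ[ℝ] ℂ}
    (h : LinearIndependent ℂ
      (Sum.elim (fun s => cForm (η s)) (Sum.elim θ (fun γ => conjForm (θ γ)))))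
    (x : ι → ℝ) (z : κ → ℂ) : ∃ v, (∀ s, η s v = x s) ∧ ∀ γ, θ γ v = z γ := by
  have hrange : LinearMap.range (LinearMap.pi (realForms η θ)) = ⊤ := by
    rw [← Submodule.span_eq (LinearMap.range _), LinearMap.coe_range]
    exact span_flip_eq_top_iff_linearIndependent.mpr (linearIndependent_realForms h)
  obtain ⟨v, hv⟩ := LinearMap.range_eq_top.mp hrange
    (Sum.elim x (Sum.elim (fun γ => (z γ).re) (fun γ => (z γ).im)))
  refine ⟨v, fun s => congrFun hv (.inl s), fun γ => Complex.ext ?_ ?_⟩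
  · exact congrFun hv (.inr (.inl γ))
  · exact congrFun hv (.inr (.inr γ))

variable [DecidableEq ι] [DecidableEq κ]

/-- Since `θ γ` is only `ℝ`-linear, each complex form needs two dual vectors `F γ` and `G γ`. -/
structure DualVectors (η : ι → V →ₗ[ℝ] ℝ) (θ : κ → V →ₗ[ℝ] ℂ) where
  E : ι → V
  F : κ → V
  G : κ → V
  η_E : ∀ s t, η s (E t) = if s = t then 1 else 0
  θ_E : ∀ γ t, θ γ (E t) = 0
  η_F : ∀ s δ, η s (F δ) = 0
  θ_F : ∀ γ δ, θ γ (F δ) = if γ = δ then 1 else 0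
  η_G : ∀ s δ, η s (G δ) = 0
  θ_G : ∀ γ δ, θ γ (G δ) = if γ = δ then I else 0

attribute [simp] DualVectors.η_E DualVectors.θ_E DualVectors.η_F DualVectors.θ_F
  DualVectors.η_G DualVectors.θ_G

theorem DualVectors.nonempty_of_linearIndependent {η : ι → V →ₗ[ℝ] ℝ} {θ : κ → V →ₗ[ℝ] ℂ}
    (h : LinearIndependent ℂ
      (Sum.elim (fun s => cForm (η s)) (Sum.elim θ (fun γ => conjForm (θ γ))))) :
    Nonempty (DualVectors η θ) := by
  choose E hηE hθE using fun t => exists_apply_eq_of_linearIndependent h (Pi.single t 1) 0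
  choose F hηF hθF using fun δ => exists_apply_eq_of_linearIndependent h 0 (Pi.single δ 1)
  choose G hηG hθG using fun δ => exists_apply_eq_of_linearIndependent h 0 (Pi.single δ I)
  exact ⟨⟨E, F, G, by simp [hηE, Pi.single_apply], by simp [hθE], by simp [hηF],
    by simp [hθF, Pi.single_apply], by simp [hηG], by simp [hθG, Pi.single_apply]⟩⟩

theorem DualVectors.linearMap_eq_zero {η : ι → V →ₗ[ℝ] ℝ} {θ : κ → V →ₗ[ℝ] ℂ}
    (D : DualVectors η θ) {A : Type*} [AddCommGroup A] [Module ℝ A] {X : V →ₗ[ℝ] A}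
    (hker : ∀ u, (∀ s, η s u = 0) → (∀ γ, θ γ u = 0) → X u = 0)
    (hE : ∀ t, X (D.E t) = 0) (hF : ∀ γ, X (D.F γ) = 0) (hG : ∀ γ, X (D.G γ) = 0) :
    X = 0 := by
  ext v
  set w := ∑ t, η t v • D.E t + ∑ γ, ((θ γ v).re • D.F γ + (θ γ v).im • D.G γ)
  have hXw : X w = 0 := by simp [w, hE, hF, hG]
  have hη : ∀ s, η s (v - w) = 0 := by simp [w]
  have hθ : ∀ γ, θ γ (v - w) = 0 := by
    simp [w, Complex.real_smul, Finset.sum_add_distrib, Complex.re_add_im]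
  simpa [hXw] using hker _ hη hθ

end DualVectors

theorem eq_zero_of_eq_I_mul_of_eq_neg_I_mul {a b : ℂ} (h₁ : b = I * a) (h₂ : b = -I * a) :
    a = 0 := by
  have : (2 * I) * a = 0 := by linear_combination h₂ - h₁
  simpa [I_ne_zero] using this

theorem eq_zero_of_eq_I_mul_of_conj_eq_I_mul {a b : ℂ} (h₁ : b = I * a)
    (h₂ : conj b = I * conj a) : a = 0 :=
  eq_zero_of_eq_I_mul_of_eq_neg_I_mul h₁ (by simpa using congrArg conj h₂)

section StructureEquations

variable {V ι κ : Type*} [AddCommGroup V] [Module ℝ V] [Fintype ι] [DecidableEq ι]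
  [Fintype κ] [DecidableEq κ]

theorem eq_zero_of_sum_wedge_eq_zero_of_invariant {η : ι → V →ₗ[ℝ] ℝ} {θ : κ → V →ₗ[ℝ] ℂ}
    (D : DualVectors η θ) {L : κ → κ → V →ₗ[ℝ] ℂ} (J : Matrix κ κ ℂ)
    (hJ : ∀ α β v, L α β v = ∑ σ, ∑ τ, J σ α * J τ β * conj (L σ τ v))
    (hwedge : ∀ σ u v, ∑ β, (L σ β u * θ β v - L σ β v * θ β u) = 0) :
    ∀ α β, L α β = 0 := by
  have hFF : ∀ σ γ δ, L σ δ (D.F γ) = L σ γ (D.F δ) := fun σ γ δ => by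
    simpa [sub_eq_zero] using hwedge σ (D.F γ) (D.F δ)
  have hFG : ∀ σ γ δ, L σ γ (D.G δ) = I * L σ γ (D.F δ) := fun σ γ δ => by
    have e : L σ δ (D.F γ) * I = L σ γ (D.G δ) := by
      simpa [sub_eq_zero] using hwedge σ (D.F γ) (D.G δ)
    rw [← e, hFF, mul_comm]
  have hG : ∀ α β γ, L α β (D.G γ) = -I * L α β (D.F γ) := fun α β γ => by
    rw [hJ, hJ α β (D.F γ), Finset.mul_sum]
    refine Finset.sum_congr rfl fun σ _ => ?_
    rw [Finset.mul_sum]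
    refine Finset.sum_congr rfl fun τ _ => ?_
    rw [hFG, map_mul, conj_I]
    ring
  have hF : ∀ α β γ, L α β (D.F γ) = 0 := fun α β γ =>
    eq_zero_of_eq_I_mul_of_eq_neg_I_mul (hFG α β γ) (hG α β γ)
  intro α β
  refine D.linearMap_eq_zero (fun u hη hθ => ?_) (fun t => ?_) (hF α β) (fun γ => ?_)
  · simpa [hη, hθ] using hwedge α u (D.F β)
  · simpa using hwedge α (D.E t) (D.F β)
  · rw [hFG, hF, mul_zero]

theorem eq_zero_of_wedge_eta_relations {η : Fin 3 → V →ₗ[ℝ] ℝ} {θ : κ → V →ₗ[ℝ] ℂ}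
    (D : DualVectors η θ) {N : Fin 3 → V →ₗ[ℝ] ℝ}
    (h₀ : ∀ u v, ∑ s, (N s u * η s v - N s v * η s u) = 0)
    (h₁ : ∀ u v, N 1 u * η 2 v - N 1 v * η 2 u = N 2 u * η 1 v - N 2 v * η 1 u)
    (h₂ : ∀ u v, N 2 u * η 0 v - N 2 v * η 0 u = N 0 u * η 2 v - N 0 v * η 2 u)
    (h₃ : ∀ u v, N 0 u * η 1 v - N 0 v * η 1 u = N 1 u * η 0 v - N 1 v * η 0 u) :
    ∀ s, N s = 0 := by
  have hE : ∀ s t, N s (D.E t) = 0 := by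
    have e₁ := h₁ (D.E 0) (D.E 1)
    have e₂ := h₁ (D.E 0) (D.E 2)
    have e₃ := h₁ (D.E 1) (D.E 2)
    have e₄ := h₂ (D.E 0) (D.E 1)
    have e₅ := h₂ (D.E 0) (D.E 2)
    have e₆ := h₂ (D.E 1) (D.E 2)
    have e₇ := h₃ (D.E 0) (D.E 1)
    have e₈ := h₃ (D.E 0) (D.E 2)
    have e₉ := h₃ (D.E 1) (D.E 2)
    simp only [DualVectors.η_E, Fin.isValue, Fin.reduceEq, ↓reduceIte, mul_zero, mul_one,
      sub_self, sub_zero, zero_sub, one_ne_zero, zero_ne_one, neg_eq_zero, zero_eq_neg]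
      at e₁ e₂ e₃ e₄ e₅ e₆ e₇ e₈ e₉
    intro s t
    fin_cases s <;> fin_cases t <;>
      simp only [Fin.reduceFinMk, Fin.zero_eta, Fin.isValue] <;> linarith
  intro s
  refine D.linearMap_eq_zero (fun u hη hθ => ?_) (hE s) (fun γ => ?_) (fun γ => ?_)
  · simpa [hη] using h₀ u (D.E s)
  · simpa using h₀ (D.E s) (D.F γ)
  · simpa using h₀ (D.E s) (D.G γ)

def FirstStructureEquation (n : ℕ) (η : Fin 3 → V →ₗ[ℝ] ℝ) (θ : Fin (2*n) → V →ₗ[ℝ] ℂ)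
    (L : Fin (2*n) → Fin (2*n) → V →ₗ[ℝ] ℂ) (M : Fin (2*n) → V →ₗ[ℝ] ℂ) : Prop :=
  ∀ α : Fin (2*n), ∀ u v : V,
    -(Complex.I * (M α u * (η 0 v : ℂ) - M α v * (η 0 u : ℂ)))
    - ∑ σ, piStd n α σ *
        ((starRingEnd ℂ) (M σ u) * ((η 1 v : ℂ) + Complex.I * (η 2 v : ℂ))
          - (starRingEnd ℂ) (M σ v) * ((η 1 u : ℂ) + Complex.I * (η 2 u : ℂ)))
    - ∑ σ, ∑ β, piStd n α σ * (L σ β u * θ β v - L σ β v * θ β u) = 0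

namespace FirstStructureEquation

variable {n : ℕ} {η : Fin 3 → V →ₗ[ℝ] ℝ} {θ : Fin (2*n) → V →ₗ[ℝ] ℂ}
  {L : Fin (2*n) → Fin (2*n) → V →ₗ[ℝ] ℂ} {M : Fin (2*n) → V →ₗ[ℝ] ℂ}

theorem apply_G (h : FirstStructureEquation n η θ L M) (D : DualVectors η θ) (α γ : Fin (2*n)) :
    M α (D.G γ) = I * M α (D.F γ) := by
  have e₁ : I * M α (D.F γ) = ∑ σ, piStd n α σ * L σ γ (D.E 0) := by
    simpa [sub_eq_zero] using h α (D.E 0) (D.F γ)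
  have e₂ : I * M α (D.G γ) = (∑ σ, piStd n α σ * L σ γ (D.E 0)) * I := by
    simpa [sub_eq_zero, Finset.sum_mul, mul_assoc] using h α (D.E 0) (D.G γ)
  apply mul_left_cancel₀ I_ne_zero
  rw [e₂, ← e₁, mul_comm]

theorem conj_apply_G (h : FirstStructureEquation n η θ L M) (D : DualVectors η θ)
    (α γ : Fin (2*n)) : conj (M α (D.G γ)) = I * conj (M α (D.F γ)) := by
  refine congrFun (eq_of_sum_piStd_mul_eq (x := fun σ => conj (M σ (D.G γ)))
    (y := fun σ => I * conj (M σ (D.F γ))) fun β => ?_) α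
  have e₁ : ∑ σ, piStd n β σ * conj (M σ (D.F γ)) = ∑ σ, piStd n β σ * L σ γ (D.E 1) := by
    simpa [sub_eq_zero] using h β (D.E 1) (D.F γ)
  have e₂ : ∑ σ, piStd n β σ * conj (M σ (D.G γ)) = (∑ σ, piStd n β σ * L σ γ (D.E 1)) * I := by
    simpa [sub_eq_zero, Finset.sum_mul, mul_assoc] using h β (D.E 1) (D.G γ)
  simp only [mul_left_comm _ I, ← Finset.mul_sum]
  rw [e₂, e₁, mul_comm]

theorem apply_E₂ (h : FirstStructureEquation n η θ L M) (D : DualVectors η θ) (α : Fin (2*n)) :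
    M α (D.E 2) = I * M α (D.E 1) := by
  have e₁ : I * M α (D.E 1) = ∑ σ, piStd n α σ * conj (M σ (D.E 0)) := by
    simpa [sub_eq_zero] using h α (D.E 0) (D.E 1)
  have e₂ : I * M α (D.E 2) = (∑ σ, piStd n α σ * conj (M σ (D.E 0))) * I := by
    simpa [sub_eq_zero, Finset.sum_mul, mul_assoc] using h α (D.E 0) (D.E 2)
  apply mul_left_cancel₀ I_ne_zero
  rw [e₂, ← e₁, mul_comm]

theorem conj_apply_E₂ (h : FirstStructureEquation n η θ L M) (D : DualVectors η θ)
    (α : Fin (2*n)) : conj (M α (D.E 2)) = I * conj (M α (D.E 1)) := by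
  refine congrFun (eq_of_sum_piStd_mul_eq (x := fun σ => conj (M σ (D.E 2)))
    (y := fun σ => I * conj (M σ (D.E 1))) fun β => ?_) α
  have e : ∑ σ, piStd n β σ * (conj (M σ (D.E 1)) * I - conj (M σ (D.E 2))) = 0 := by
    simpa using h β (D.E 1) (D.E 2)
  simp only [mul_sub, Finset.sum_sub_distrib, sub_eq_zero] at e
  simp only [mul_comm I]
  exact e.symm

theorem M_eq_zero (h : FirstStructureEquation n η θ L M) (D : DualVectors η θ) (α : Fin (2*n)) :
    M α = 0 := by
  have hF : ∀ γ, M α (D.F γ) = 0 := fun γ =>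
    eq_zero_of_eq_I_mul_of_conj_eq_I_mul (h.apply_G D α γ) (h.conj_apply_G D α γ)
  have hE₁ : ∀ β, M β (D.E 1) = 0 := fun β =>
    eq_zero_of_eq_I_mul_of_conj_eq_I_mul (h.apply_E₂ D β) (h.conj_apply_E₂ D β)
  have hE₀ : M α (D.E 0) = 0 := by
    refine (map_eq_zero_iff conj (RingHom.injective _)).mp
      (congrFun (eq_of_sum_piStd_mul_eq (x := fun σ => conj (M σ (D.E 0))) (y := 0)
        fun β => ?_) α)
    simpa [hE₁] using h β (D.E 0) (D.E 1)
  refine D.linearMap_eq_zero (fun u hη hθ => ?_) (fun t => ?_) hF (fun γ => ?_)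
  · simpa [hη, hθ] using h α u (D.E 0)
  · fin_cases t
    · exact hE₀
    · exact hE₁ α
    · simp [h.apply_E₂ D, hE₁]
  · rw [h.apply_G D, hF, mul_zero]

theorem sum_wedge_eq_zero (h : FirstStructureEquation n η θ L M) (hM : ∀ α, M α = 0)
    (σ : Fin (2*n)) (u v : V) : ∑ β, (L σ β u * θ β v - L σ β v * θ β u) = 0 := by
  refine congrFun (eq_of_sum_piStd_mul_eq
    (x := fun σ => ∑ β, (L σ β u * θ β v - L σ β v * θ β u)) (y := 0) fun α => ?_) σ
  have e := h α u v
  simp only [hM, LinearMap.zero_apply, map_zero, zero_mul, mul_zero, sub_zero,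
    Finset.sum_const_zero, neg_zero, zero_sub, neg_eq_zero] at e
  simpa only [Pi.zero_apply, mul_zero, Finset.sum_const_zero, Finset.mul_sum] using e

end FirstStructureEquation

end StructureEquations

theorem stmt17_general (n : ℕ) (V : Type*) [AddCommGroup V] [Module ℝ V]
    (η : Fin 3 → V →ₗ[ℝ] ℝ) (θ : Fin (2*n) → V →ₗ[ℝ] ℂ) (φf : Fin 4 → V →ₗ[ℝ] ℝ)
    (hindep : LinearIndependent ℂ
      (Sum.elim (fun s : Fin 3 => cForm (η s))
        (Sum.elim θ
          (Sum.elim (fun α : Fin (2*n) => conjForm (θ α))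
            (fun j : Fin 4 => cForm (φf j))))))
    (L : Fin (2*n) → Fin (2*n) → V →ₗ[ℝ] ℂ)
    (M : Fin (2*n) → V →ₗ[ℝ] ℂ)
    (N : Fin 3 → V →ₗ[ℝ] ℝ)
    (hLjinv : ∀ α β, ∀ v : V, L α β v =
      ∑ σ, ∑ τ, piStd n σ α * piStd n τ β * (starRingEnd ℂ) (L σ τ v))
    (heq1 : ∀ α : Fin (2*n), ∀ u v : V,
      -(Complex.I * (M α u * (η 0 v : ℂ) - M α v * (η 0 u : ℂ)))
      - ∑ σ, piStd n α σ *
          ((starRingEnd ℂ) (M σ u) * ((η 1 v : ℂ) + Complex.I * (η 2 v : ℂ))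
            - (starRingEnd ℂ) (M σ v) * ((η 1 u : ℂ) + Complex.I * (η 2 u : ℂ)))
      - ∑ σ, ∑ β, piStd n α σ * (L σ β u * θ β v - L σ β v * θ β u) = 0)
    (heq2 : ∀ u v : V,
      -(∑ s, ((N s u : ℂ) * (η s v : ℂ) - (N s v : ℂ) * (η s u : ℂ)))
      - 2 * ∑ β, ((starRingEnd ℂ) (M β u) * θ β v - (starRingEnd ℂ) (M β v) * θ β u)
      - 2 * ∑ β, (M β u * (starRingEnd ℂ) (θ β v) - M β v * (starRingEnd ℂ) (θ β u)) = 0)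
    (heq3 : ∀ u v : V,
      -((N 1 u : ℂ) * (η 2 v : ℂ) - (N 1 v : ℂ) * (η 2 u : ℂ))
      + ((N 2 u : ℂ) * (η 1 v : ℂ) - (N 2 v : ℂ) * (η 1 u : ℂ))
      + 2 * Complex.I *
          ∑ β, ((starRingEnd ℂ) (M β u) * θ β v - (starRingEnd ℂ) (M β v) * θ β u)
      - 2 * Complex.I *
          ∑ β, (M β u * (starRingEnd ℂ) (θ β v) - M β v * (starRingEnd ℂ) (θ β u)) = 0)
    (heq4 : ∀ u v : V,
      -((N 2 u : ℂ) * (η 0 v : ℂ) - (N 2 v : ℂ) * (η 0 u : ℂ))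
      + ((N 0 u : ℂ) * (η 2 v : ℂ) - (N 0 v : ℂ) * (η 2 u : ℂ))
      - 2 * ∑ σ, ∑ β, piStd n σ β * (M σ u * θ β v - M σ v * θ β u)
      - 2 * ∑ σ, ∑ β, piStd n σ β *
          ((starRingEnd ℂ) (M σ u) * (starRingEnd ℂ) (θ β v)
            - (starRingEnd ℂ) (M σ v) * (starRingEnd ℂ) (θ β u)) = 0)
    (heq5 : ∀ u v : V,
      -((N 0 u : ℂ) * (η 1 v : ℂ) - (N 0 v : ℂ) * (η 1 u : ℂ))
      + ((N 1 u : ℂ) * (η 0 v : ℂ) - (N 1 v : ℂ) * (η 0 u : ℂ))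
      + 2 * Complex.I * ∑ σ, ∑ β, piStd n σ β * (M σ u * θ β v - M σ v * θ β u)
      - 2 * Complex.I * ∑ σ, ∑ β, piStd n σ β *
          ((starRingEnd ℂ) (M σ u) * (starRingEnd ℂ) (θ β v)
            - (starRingEnd ℂ) (M σ v) * (starRingEnd ℂ) (θ β u)) = 0) :
    (∀ α β, L α β = 0) ∧ (∀ α, M α = 0) ∧ (∀ s, N s = 0) := by
  obtain ⟨D⟩ := DualVectors.nonempty_of_linearIndependent (η := η) (θ := θ) <| by
    convert hindep.comp (Sum.map id (Sum.map id Sum.inl))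
      (Sum.map_injective.2 ⟨Function.injective_id,
        Sum.map_injective.2 ⟨Function.injective_id, Sum.inl_injective⟩⟩) using 1
    ext (s | γ | γ) : 1 <;> rfl
  have hM := FirstStructureEquation.M_eq_zero heq1 D
  simp only [hM, LinearMap.zero_apply, map_zero, zero_mul, mul_zero, sub_zero, add_zero,
    Finset.sum_const_zero, neg_eq_zero, neg_add_eq_zero] at heq2 heq3 heq4 heq5
  have hL := eq_zero_of_sum_wedge_eq_zero_of_invariant D (piStd n) hLjinv
    (FirstStructureEquation.sum_wedge_eq_zero heq1 hM)
  have hN := eq_zero_of_wedge_eta_relations D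
    (mod_cast heq2) (mod_cast heq3) (mod_cast heq4) (mod_cast heq5)
  exact ⟨hL, hM, hN⟩

/-- uniqueness of the connection forms, pointwise-algebraic form: if
`η_s, θ^α, θ^{ᾱ}, φ₀,…,φ₃` are pointwise linearly independent 1-forms, `L_{αβ}` are
symmetric `𝔧`-invariant complex 1-forms, `M^α` complex 1-forms, `N_s` real 1-forms,
and the five 2-form identities \eqref{str-eq-dif} hold, then `L = 0`, `M = 0`, `N = 0`. -/
theorem stmt17 (n : ℕ) (V : Type*) [AddCommGroup V] [Module ℝ V]
    (η : Fin 3 → V →ₗ[ℝ] ℝ) (θ : Fin (2*n) → V →ₗ[ℝ] ℂ) (φf : Fin 4 → V →ₗ[ℝ] ℝ)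
    (hindep : LinearIndependent ℂ
      (Sum.elim (fun s : Fin 3 => cForm (η s))
        (Sum.elim θ
          (Sum.elim (fun α : Fin (2*n) => conjForm (θ α))
            (fun j : Fin 4 => cForm (φf j))))))
    (L : Fin (2*n) → Fin (2*n) → V →ₗ[ℝ] ℂ)
    (M : Fin (2*n) → V →ₗ[ℝ] ℂ)
    (N : Fin 3 → V →ₗ[ℝ] ℝ)
    (hLsymm : ∀ α β, L α β = L β α)
    (hLjinv : ∀ α β, ∀ v : V, L α β v =
      ∑ σ, ∑ τ, piStd n σ α * piStd n τ β * (starRingEnd ℂ) (L σ τ v))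
    (heq1 : ∀ α : Fin (2*n), ∀ u v : V,
      -(Complex.I * (M α u * (η 0 v : ℂ) - M α v * (η 0 u : ℂ)))
      - ∑ σ, piStd n α σ *
          ((starRingEnd ℂ) (M σ u) * ((η 1 v : ℂ) + Complex.I * (η 2 v : ℂ))
            - (starRingEnd ℂ) (M σ v) * ((η 1 u : ℂ) + Complex.I * (η 2 u : ℂ)))
      - ∑ σ, ∑ β, piStd n α σ * (L σ β u * θ β v - L σ β v * θ β u) = 0)
    (heq2 : ∀ u v : V,
      -(∑ s, ((N s u : ℂ) * (η s v : ℂ) - (N s v : ℂ) * (η s u : ℂ)))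
      - 2 * ∑ β, ((starRingEnd ℂ) (M β u) * θ β v - (starRingEnd ℂ) (M β v) * θ β u)
      - 2 * ∑ β, (M β u * (starRingEnd ℂ) (θ β v) - M β v * (starRingEnd ℂ) (θ β u)) = 0)
    (heq3 : ∀ u v : V,
      -((N 1 u : ℂ) * (η 2 v : ℂ) - (N 1 v : ℂ) * (η 2 u : ℂ))
      + ((N 2 u : ℂ) * (η 1 v : ℂ) - (N 2 v : ℂ) * (η 1 u : ℂ))
      + 2 * Complex.I *
          ∑ β, ((starRingEnd ℂ) (M β u) * θ β v - (starRingEnd ℂ) (M β v) * θ β u)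
      - 2 * Complex.I *
          ∑ β, (M β u * (starRingEnd ℂ) (θ β v) - M β v * (starRingEnd ℂ) (θ β u)) = 0)
    (heq4 : ∀ u v : V,
      -((N 2 u : ℂ) * (η 0 v : ℂ) - (N 2 v : ℂ) * (η 0 u : ℂ))
      + ((N 0 u : ℂ) * (η 2 v : ℂ) - (N 0 v : ℂ) * (η 2 u : ℂ))
      - 2 * ∑ σ, ∑ β, piStd n σ β * (M σ u * θ β v - M σ v * θ β u)
      - 2 * ∑ σ, ∑ β, piStd n σ β *
          ((starRingEnd ℂ) (M σ u) * (starRingEnd ℂ) (θ β v)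
            - (starRingEnd ℂ) (M σ v) * (starRingEnd ℂ) (θ β u)) = 0)
    (heq5 : ∀ u v : V,
      -((N 0 u : ℂ) * (η 1 v : ℂ) - (N 0 v : ℂ) * (η 1 u : ℂ))
      + ((N 1 u : ℂ) * (η 0 v : ℂ) - (N 1 v : ℂ) * (η 0 u : ℂ))
      + 2 * Complex.I * ∑ σ, ∑ β, piStd n σ β * (M σ u * θ β v - M σ v * θ β u)
      - 2 * Complex.I * ∑ σ, ∑ β, piStd n σ β *
          ((starRingEnd ℂ) (M σ u) * (starRingEnd ℂ) (θ β v)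
            - (starRingEnd ℂ) (M σ v) * (starRingEnd ℂ) (θ β u)) = 0) :
    (∀ α β, L α β = 0) ∧ (∀ α, M α = 0) ∧ (∀ s, N s = 0) :=
  stmt17_general n V η θ φf hindep L M N hLjinv heq1 heq2 heq3 heq4 heq5
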